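/- Let 0 < α < 1 and for each integer l ≥ 2 define, for f ∈ L²_α[0,1], the operator (𝓑_l f)(s) = −2(l − 1) s^{l−2} ∫_s^1 f(r) r^{1−l} dr − f(s) for s ∈ (0,1). Then each 𝓑_l is bounded on L²_α[0,1] and ‖𝓑_l‖ ≤ 23/α, uniformly in l ≥ 2. -/

import Mathlib

/-!
Write `l = m + 2`. Pointwise `|𝓑_l f| ≤ T|f| + |f|`, where `T` is the positive Volterra operator
with kernel `k(s, r) = 2(m+1) s^m / r^(m+1)` on `s < r`, and `T` is bounded on `L²_α` by Schur's
test with the test function `h(r) = r⁻¹ (1 - r²)^(α/2 - 1)`: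
* `∫_s^1 k(s, r) h(r) dr ≤ (4/α) h(s)`, because `(4/α) s^m (r^-(m+1) - 1) (1 - r²)^(α/2 - 1)` is a
  nonnegative supersolution on `(s, 1)`; Bernoulli's inequality makes this uniform in `m`;
* `∫_0^r k(s, r) h(s) w(s) ds ≤ 2 h(r) w(r)`, because `h w = (1 - s²)^(-α/2)` is increasing and
  `∫_0^r (m+1) s^m ds = r^(m+1)`.
So `‖T‖² ≤ 8/α`, and `(a + b)² ≤ 2a² + 2b²` gives `‖𝓑_l‖² ≤ 16/α + 2 ≤ (23/α)²`.
-/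

open MeasureTheory Real Set ENNReal NNReal

/-- `(𝓑_l f)(s) = -2(l-1) s^{l-2} ∫_s^1 f(r) r^{1-l} dr - f(s)` for `l ≥ 2`. -/
noncomputable def Bl (l : ℤ) (f : ℝ → ℂ) (s : ℝ) : ℂ :=
  -(((2 * ((l : ℝ) - 1) * s ^ (l - 2) : ℝ) : ℂ) *
      ∫ r in Ioo s (1:ℝ), ((r ^ (1 - l) : ℝ) : ℂ) * f r) - f s

open Filter Topology

theorem sq_lintegral_mul_le_lintegral_mul_lintegral_div {Y : Type*} [MeasurableSpace Y]
    {ν : Measure Y} {k G p : Y → ℝ≥0∞} (hk : Measurable k) (hG : Measurable G) (hp : Measurable p)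
    (hp_pos : ∀ᵐ y ∂ν, p y ≠ 0 ∧ p y ≠ ∞) :
    (∫⁻ y, k y * G y ∂ν) ^ 2 ≤ (∫⁻ y, k y * p y ∂ν) * ∫⁻ y, k y * (G y ^ 2 / p y) ∂ν := by
  have hsqrt : ∀ a : ℝ≥0∞, (a ^ (1 / 2 : ℝ)) ^ (2 : ℝ) = a := fun a => by
    rw [← ENNReal.rpow_mul]; norm_num
  have hsplit : ∀ᵐ y ∂ν, k y * G y =
      (k y * p y) ^ (1 / 2 : ℝ) * (k y * (G y ^ 2 / p y)) ^ (1 / 2 : ℝ) := by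
    filter_upwards [hp_pos] with y ⟨hp0, hptop⟩
    rw [← ENNReal.mul_rpow_of_nonneg _ _ (by norm_num),
      show k y * p y * (k y * (G y ^ 2 / p y)) = (k y * G y) ^ 2 by
        rw [mul_mul_mul_comm, ENNReal.mul_div_cancel hp0 hptop]; ring,
      ← ENNReal.rpow_two, ← ENNReal.rpow_mul]
    norm_num
  have hHolder := ENNReal.lintegral_mul_le_Lp_mul_Lq ν Real.HolderConjugate.two_two
    ((hk.mul hp).pow_const (1 / 2 : ℝ)).aemeasurable
    ((hk.mul ((hG.pow_const 2).div hp)).pow_const (1 / 2 : ℝ)).aemeasurable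
  simp only [Pi.mul_apply, Pi.div_apply, hsqrt] at hHolder
  rw [lintegral_congr_ae hsplit]
  calc _ ≤ ((∫⁻ y, k y * p y ∂ν) ^ (1 / 2 : ℝ) *
        (∫⁻ y, k y * (G y ^ 2 / p y) ∂ν) ^ (1 / 2 : ℝ)) ^ 2 := by gcongr
    _ = _ := by rw [mul_pow, ← ENNReal.rpow_two, ← ENNReal.rpow_two, hsqrt, hsqrt]

theorem lintegral_sq_lintegral_mul_le_of_schur {X Y : Type*} [MeasurableSpace X]
    [MeasurableSpace Y] {μ : Measure X} {ν : Measure Y} [SFinite μ] [SFinite ν]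
    {K : X → Y → ℝ≥0∞} {G p ρ : Y → ℝ≥0∞} {q σ : X → ℝ≥0∞} {C₁ C₂ : ℝ≥0∞}
    (hK : Measurable (Function.uncurry K)) (hG : Measurable G) (hp : Measurable p)
    (hρ : Measurable ρ) (hq : Measurable q) (hσ : Measurable σ)
    (hp_pos : ∀ᵐ y ∂ν, p y ≠ 0 ∧ p y ≠ ∞)
    (h₁ : ∀ᵐ x ∂μ, ∫⁻ y, K x y * p y ∂ν ≤ C₁ * q x)
    (h₂ : ∀ᵐ y ∂ν, ∫⁻ x, K x y * q x * σ x ∂μ ≤ C₂ * (p y * ρ y)) :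
    ∫⁻ x, (∫⁻ y, K x y * G y ∂ν) ^ 2 * σ x ∂μ ≤ C₁ * C₂ * ∫⁻ y, G y ^ 2 * ρ y ∂ν := by
  set D : Y → ℝ≥0∞ := fun y => G y ^ 2 / p y
  have hD : Measurable D := (hG.pow_const 2).div hp
  have hKD : Measurable fun z : X × Y => K z.1 z.2 * D z.2 := hK.mul (hD.comp measurable_snd)
  calc ∫⁻ x, (∫⁻ y, K x y * G y ∂ν) ^ 2 * σ x ∂μ
      ≤ ∫⁻ x, C₁ * (q x * σ x * ∫⁻ y, K x y * D y ∂ν) ∂μ := by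
        refine lintegral_mono_ae ?_
        filter_upwards [h₁] with x hx
        calc (∫⁻ y, K x y * G y ∂ν) ^ 2 * σ x
            ≤ (∫⁻ y, K x y * p y ∂ν) * (∫⁻ y, K x y * D y ∂ν) * σ x := by
              gcongr
              exact sq_lintegral_mul_le_lintegral_mul_lintegral_div
                (hK.comp measurable_prodMk_left) hG hp hp_pos
          _ ≤ C₁ * q x * (∫⁻ y, K x y * D y ∂ν) * σ x := by gcongr
          _ = _ := by ring
    _ = C₁ * ∫⁻ y, (∫⁻ x, K x y * q x * σ x ∂μ) * D y ∂ν := by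
        have hKqσ : Measurable fun z : X × Y => K z.1 z.2 * q z.1 * σ z.1 :=
          (hK.mul (hq.comp measurable_fst)).mul (hσ.comp measurable_fst)
        rw [lintegral_const_mul _ (by exact (hq.mul hσ).mul hKD.lintegral_prod_right')]
        congr 1
        calc ∫⁻ x, q x * σ x * ∫⁻ y, K x y * D y ∂ν ∂μ
            = ∫⁻ x, ∫⁻ y, K x y * q x * σ x * D y ∂ν ∂μ := by
              refine lintegral_congr fun x => ?_
              rw [← lintegral_const_mul _ (by exact (hK.comp measurable_prodMk_left).mul hD)]
              congr 1; ext y; ring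
          _ = ∫⁻ y, ∫⁻ x, K x y * q x * σ x * D y ∂μ ∂ν :=
              lintegral_lintegral_swap (hKqσ.mul (hD.comp measurable_snd)).aemeasurable
          _ = _ := lintegral_congr fun y =>
              lintegral_mul_const _ (hKqσ.comp measurable_prodMk_right)
    _ ≤ C₁ * ∫⁻ y, C₂ * (G y ^ 2 * ρ y) ∂ν := by
        gcongr 1
        refine lintegral_mono_ae ?_
        filter_upwards [h₂, hp_pos] with y hy ⟨hp0, hptop⟩
        calc (∫⁻ x, K x y * q x * σ x ∂μ) * D y ≤ C₂ * (p y * ρ y) * D y := by gcongr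
          _ = C₂ * (G y ^ 2 * ρ y) := by
            simp only [D]
            rw [mul_assoc, mul_right_comm, ENNReal.mul_div_cancel hp0 hptop]
    _ = C₁ * C₂ * ∫⁻ y, G y ^ 2 * ρ y ∂ν := by
        rw [lintegral_const_mul _ (by exact (hG.pow_const 2).mul hρ), mul_assoc]

theorem setLIntegral_Ioo_ofReal_deriv_eq_sub {f f' : ℝ → ℝ} {a b : ℝ} (hab : a ≤ b)
    (hf : ContinuousOn f (Icc a b)) (hderiv : ∀ x ∈ Ioo a b, HasDerivAt f (f' x) x)
    (hf' : ∀ x ∈ Ioo a b, 0 ≤ f' x) :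
    ∫⁻ x in Ioo a b, ENNReal.ofReal (f' x) = ENNReal.ofReal (f b - f a) := by
  have hint : IntegrableOn f' (Ioc a b) :=
    intervalIntegral.integrableOn_deriv_of_nonneg hf hderiv hf'
  rw [← intervalIntegral.integral_eq_sub_of_hasDerivAt_of_le hab hf hderiv
      (intervalIntegrable_iff_integrableOn_Ioc_of_le hab |>.2 hint),
    intervalIntegral.integral_of_le hab, integral_Ioc_eq_integral_Ioo,
    ofReal_integral_eq_lintegral_ofReal (hint.mono_set Ioo_subset_Ioc_self)
      (ae_restrict_of_forall_mem measurableSet_Ioo hf')]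

theorem setLIntegral_Ioo_ofReal_deriv_le_sub {f f' : ℝ → ℝ} {a b M : ℝ} (hab : a < b)
    (hderiv : ∀ x ∈ Ico a b, HasDerivAt f (f' x) x) (hf' : ∀ x ∈ Ioo a b, 0 ≤ f' x)
    (hM : ∀ x ∈ Ioo a b, f x ≤ M) :
    ∫⁻ x in Ioo a b, ENNReal.ofReal (f' x) ≤ ENNReal.ofReal (M - f a) := by
  have hmeas : AEMeasurable (fun x => ENNReal.ofReal (f' x)) (volume.restrict (Ioo a b)) :=
    ENNReal.measurable_ofReal.comp_aemeasurable <|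
      (measurable_deriv f).aemeasurable.congr <| ae_restrict_of_forall_mem measurableSet_Ioo
        fun x hx => (hderiv x (Ioo_subset_Ico_self hx)).deriv
  have hcover := (aecover_Ioo_of_Ioo (μ := volume) (l := 𝓝[<] b) (a := fun _ => a)
    tendsto_const_nhds (tendsto_nhdsWithin_of_tendsto_nhds tendsto_id)
    ).lintegral_tendsto_of_countably_generated hmeas
  refine le_of_tendsto hcover ?_
  filter_upwards [Ioo_mem_nhdsLT hab] with t ht
  rw [Measure.restrict_restrict measurableSet_Ioo, Ioo_inter_Ioo, max_self, id, min_eq_left ht.2.le,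
    setLIntegral_Ioo_ofReal_deriv_eq_sub ht.1.le
      (fun x hx => (hderiv x ⟨hx.1, hx.2.trans_lt ht.2⟩).continuousAt.continuousWithinAt)
      (fun x hx => hderiv x ⟨hx.1.le, hx.2.trans ht.2⟩)
      (fun x hx => hf' x ⟨hx.1, hx.2.trans ht.2⟩)]
  exact ENNReal.ofReal_le_ofReal (by linarith [hM t ht])

theorem two_mul_inv_pow_sub_one_div_le {r : ℝ} (hr0 : 0 < r) (hr1 : r < 1) (n : ℕ) :
    2 * r * ((r ^ n)⁻¹ - 1) / (1 - r ^ 2) ≤ n / r ^ (n + 1) := by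
  have hbern : 1 - r ^ n ≤ n * (1 - r) := by
    nlinarith [one_add_mul_sub_le_pow (by linarith : (-1 : ℝ) ≤ r) n]
  have hcancel : ((r ^ n)⁻¹ - 1) * r ^ n = 1 - r ^ n := by field_simp
  rw [div_le_div_iff₀ (by nlinarith) (pow_pos hr0 _), pow_succ]
  have hlhs : 2 * r * ((r ^ n)⁻¹ - 1) * (r ^ n * r) = 2 * r ^ 2 * (1 - r ^ n) := by
    rw [← hcancel]; ring
  rw [hlhs]
  nlinarith [mul_le_mul_of_nonneg_left hbern (by positivity : (0:ℝ) ≤ 2 * r ^ 2),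
    mul_nonneg (mul_nonneg n.cast_nonneg (by linarith : 0 ≤ 1 - r))
      (by nlinarith : 0 ≤ 1 + r - 2 * r ^ 2)]

noncomputable def schurTest (α r : ℝ) : ℝ := r⁻¹ * (1 - r ^ 2) ^ (α / 2 - 1)

/-- Up to sign, `𝓑_{m+2} f + f` is the integral operator with this kernel on `(0, 1)`. -/
noncomputable def volterraKernel (m : ℕ) (s r : ℝ) : ℝ≥0∞ :=
  if s < r then ENNReal.ofReal (2 * (m + 1) * s ^ m / r ^ (m + 1)) else 0

theorem schurTest_mul_weight (α : ℝ) {r : ℝ} (hr0 : 0 < r) (hr1 : r < 1) :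
    schurTest α r * ((1 - r ^ 2) ^ (1 - α) * r) = (1 - r ^ 2) ^ (-(α / 2)) := by
  have hr2 : 0 < 1 - r ^ 2 := by nlinarith
  rw [schurTest, show -(α / 2) = (α / 2 - 1) + (1 - α) by ring, rpow_add hr2]
  field_simp

theorem hasDerivAt_inv_pow_sub_one_mul_rpow (m : ℕ) (b : ℝ) {r : ℝ} (hr0 : 0 < r)
    (hr : 1 - r ^ 2 ≠ 0) :
    HasDerivAt (fun x => ((x ^ (m + 1))⁻¹ - 1) * (1 - x ^ 2) ^ b)
      (-((1 - r ^ 2) ^ b * ((m + 1) / r ^ (m + 2) +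
        b * (2 * r * ((r ^ (m + 1))⁻¹ - 1) / (1 - r ^ 2))))) r := by
  have := (((hasDerivAt_pow (m + 1) r).inv (pow_ne_zero _ hr0.ne')).sub_const 1).mul
    (((hasDerivAt_pow 2 r).const_sub 1).rpow_const (p := b) (Or.inl hr))
  refine this.congr_deriv ?_
  simp only [Pi.inv_apply, rpow_sub_one hr, add_tsub_cancel_right]
  push_cast
  field_simp
  ring

theorem setLIntegral_Ioo_kernel_mul_schurTest_le {α : ℝ} (hα0 : 0 < α) (hα2 : α ≤ 2) (m : ℕ)
    {s : ℝ} (hs0 : 0 < s) (hs1 : s < 1) :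
    ∫⁻ r in Ioo s 1, ENNReal.ofReal (2 * (m + 1) * s ^ m / r ^ (m + 1) * schurTest α r)
      ≤ ENNReal.ofReal (4 / α * schurTest α s) := by
  set b := α / 2 - 1
  set c := 4 / α * s ^ m
  have hb : b ≤ 0 := by simp only [b]; linarith
  have hc : 0 ≤ c := by positivity
  set H : ℝ → ℝ := fun r => c * (((r ^ (m + 1))⁻¹ - 1) * (1 - r ^ 2) ^ b)
  set H' : ℝ → ℝ := fun r => c * ((1 - r ^ 2) ^ b * ((m + 1) / r ^ (m + 2) +
    b * (2 * r * ((r ^ (m + 1))⁻¹ - 1) / (1 - r ^ 2))))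
  have hderiv : ∀ r ∈ Ico s 1, HasDerivAt (fun r => -H r) (H' r) r := fun r hr => by
    have hr2 : 1 - r ^ 2 ≠ 0 := by nlinarith [hs0.trans_le hr.1, hr.2]
    exact ((hasDerivAt_inv_pow_sub_one_mul_rpow m b (hs0.trans_le hr.1) hr2).const_mul c).neg
      |>.congr_deriv (by simp only [H']; ring)
  have hle : ∀ r ∈ Ioo s 1, 2 * (m + 1) * s ^ m / r ^ (m + 1) * schurTest α r ≤ H' r := by
    intro r hr
    have hr0 : 0 < r := hs0.trans hr.1
    have hr2 : 0 < 1 - r ^ 2 := by nlinarith [hr.2]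
    have key := two_mul_inv_pow_sub_one_div_le hr0 hr.2 (m + 1)
    push_cast [show m + 1 + 1 = m + 2 from rfl] at key
    -- the integrand is `H'` with `key` replaced by an equality, since `c * (1 + b) = 2 * s ^ m`
    calc _ = c * ((1 - r ^ 2) ^ b * ((1 + b) * ((m + 1) / r ^ (m + 2)))) := by
          simp only [c, b, schurTest]; field_simp; ring
      _ ≤ H' r := by
          simp only [H']
          gcongr c * (_ * ?_)
          nlinarith [mul_le_mul_of_nonpos_left key hb]
  have hnonneg : ∀ r ∈ Ioo s 1, 0 ≤ 2 * (m + 1) * s ^ m / r ^ (m + 1) * schurTest α r := by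
    intro r hr
    have hr0 : 0 < r := hs0.trans hr.1
    have hr2 : 0 < 1 - r ^ 2 := by nlinarith [hr.2]
    unfold schurTest; positivity
  have hH : ∀ r ∈ Ioo s 1, -H r ≤ 0 := by
    intro r hr
    have hr0 : 0 < r := hs0.trans hr.1
    have : 1 ≤ (r ^ (m + 1))⁻¹ := one_le_inv₀ (pow_pos hr0 _) |>.2 (pow_le_one₀ hr0.le hr.2.le)
    have := rpow_nonneg (by nlinarith [hr.2] : 0 ≤ 1 - r ^ 2) b
    simp only [H, neg_nonpos]
    exact mul_nonneg hc (mul_nonneg (by linarith) this)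
  calc _ ≤ ∫⁻ r in Ioo s 1, ENNReal.ofReal (H' r) :=
        setLIntegral_mono' measurableSet_Ioo fun r hr => ENNReal.ofReal_le_ofReal (hle r hr)
    _ ≤ ENNReal.ofReal (0 - -H s) := setLIntegral_Ioo_ofReal_deriv_le_sub hs1 hderiv
        (fun r hr => (hnonneg r hr).trans (hle r hr)) hH
    _ ≤ _ := by
        refine ENNReal.ofReal_le_ofReal ?_
        have hsm : s ^ m * (s ^ (m + 1))⁻¹ = s⁻¹ := by
          rw [pow_succ, mul_inv, ← mul_assoc, mul_inv_cancel₀ (pow_ne_zero m hs0.ne'), one_mul]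
        have := rpow_nonneg (by nlinarith : 0 ≤ 1 - s ^ 2) b
        calc 0 - -H s = 4 / α * (s⁻¹ - s ^ m) * (1 - s ^ 2) ^ b := by
              simp only [H, c]; rw [← hsm]; ring
          _ ≤ 4 / α * s⁻¹ * (1 - s ^ 2) ^ b := by gcongr; linarith [pow_nonneg hs0.le m]
          _ = _ := by simp only [schurTest, b]; ring

theorem setLIntegral_Ioo_kernel_mul_rpow_le {α : ℝ} (hα : 0 ≤ α) (m : ℕ) {r : ℝ} (hr0 : 0 < r)
    (hr1 : r < 1) :
    ∫⁻ s in Ioo 0 r, ENNReal.ofReal (2 * (m + 1) * s ^ m / r ^ (m + 1) * (1 - s ^ 2) ^ (-(α / 2)))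
      ≤ ENNReal.ofReal (2 * (1 - r ^ 2) ^ (-(α / 2))) := by
  set c := 2 * (1 - r ^ 2) ^ (-(α / 2)) / r ^ (m + 1)
  have hc : 0 ≤ c :=
    div_nonneg (mul_nonneg zero_le_two (rpow_nonneg (by nlinarith) _)) (by positivity)
  calc _ ≤ ∫⁻ s in Ioo 0 r, ENNReal.ofReal (c * ((m + 1) * s ^ m)) := by
        refine setLIntegral_mono' measurableSet_Ioo fun s hs => ENNReal.ofReal_le_ofReal ?_
        have hmono : (1 - s ^ 2) ^ (-(α / 2)) ≤ (1 - r ^ 2) ^ (-(α / 2)) :=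
          rpow_le_rpow_of_nonpos (by nlinarith) (by nlinarith [hs.1, hs.2]) (by linarith)
        have := pow_nonneg hs.1.le m
        calc _ = 2 * (m + 1) * s ^ m / r ^ (m + 1) * (1 - s ^ 2) ^ (-(α / 2)) := rfl
          _ ≤ 2 * (m + 1) * s ^ m / r ^ (m + 1) * (1 - r ^ 2) ^ (-(α / 2)) := by gcongr
          _ = _ := by simp only [c]; ring
    _ = ENNReal.ofReal (c * r ^ (m + 1) - c * 0 ^ (m + 1)) :=
        setLIntegral_Ioo_ofReal_deriv_eq_sub (f := fun s => c * s ^ (m + 1)) hr0.le (by fun_prop)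
          (fun s _ => by simpa using (hasDerivAt_pow (m + 1) s).const_mul c)
          (fun s hs => mul_nonneg hc (by have := pow_nonneg hs.1.le m; positivity))
    _ = _ := by
        rw [zero_pow (Nat.succ_ne_zero m), mul_zero, sub_zero,
          div_mul_cancel₀ _ (pow_ne_zero _ hr0.ne')]

theorem setLIntegral_Ioo_volterraKernel_right {m : ℕ} {s : ℝ} (hs : 0 ≤ s) (F : ℝ → ℝ≥0∞) :
    ∫⁻ r in Ioo 0 1, volterraKernel m s r * F r
      = ∫⁻ r in Ioo s 1, ENNReal.ofReal (2 * (m + 1) * s ^ m / r ^ (m + 1)) * F r := by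
  have : ∀ r, volterraKernel m s r * F r
      = (Ioi s).indicator
          (fun r => ENNReal.ofReal (2 * (m + 1) * s ^ m / r ^ (m + 1)) * F r) r := by
    intro r; by_cases h : s < r <;> simp [volterraKernel, h]
  simp_rw [this]
  rw [lintegral_indicator measurableSet_Ioi, Measure.restrict_restrict measurableSet_Ioi]
  congr 2
  ext r; simp only [mem_inter_iff, mem_Ioi, mem_Ioo]
  exact ⟨fun h => ⟨h.1, h.2.2⟩, fun h => ⟨h.1, hs.trans_lt h.1, h.2⟩⟩

theorem setLIntegral_Ioo_volterraKernel_left {m : ℕ} {r : ℝ} (hr : r ≤ 1) (F : ℝ → ℝ≥0∞) :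
    ∫⁻ s in Ioo 0 1, volterraKernel m s r * F s
      = ∫⁻ s in Ioo 0 r, ENNReal.ofReal (2 * (m + 1) * s ^ m / r ^ (m + 1)) * F s := by
  have : ∀ s, volterraKernel m s r * F s
      = (Iio r).indicator
          (fun s => ENNReal.ofReal (2 * (m + 1) * s ^ m / r ^ (m + 1)) * F s) s := by
    intro s; by_cases h : s < r <;> simp [volterraKernel, h]
  simp_rw [this]
  rw [lintegral_indicator measurableSet_Iio, Measure.restrict_restrict measurableSet_Iio,
    Iio_inter_Ioo, min_eq_left hr]

theorem setLIntegral_sq_volterraKernel_le {α : ℝ} (hα0 : 0 < α) (hα2 : α ≤ 2) (m : ℕ)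
    {G : ℝ → ℝ≥0∞} (hG : Measurable G) :
    ∫⁻ s in Ioo 0 1, (∫⁻ r in Ioo 0 1, volterraKernel m s r * G r) ^ 2 *
        ENNReal.ofReal ((1 - s ^ 2) ^ (1 - α) * s)
      ≤ ENNReal.ofReal (8 / α) *
        ∫⁻ r in Ioo 0 1, G r ^ 2 * ENNReal.ofReal ((1 - r ^ 2) ^ (1 - α) * r) := by
  have hweight : Measurable fun r : ℝ => ENNReal.ofReal ((1 - r ^ 2) ^ (1 - α) * r) := by
    fun_prop
  have htest : Measurable fun r : ℝ => ENNReal.ofReal (schurTest α r) := by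
    unfold schurTest; fun_prop
  have hK : Measurable (Function.uncurry (volterraKernel m)) :=
    Measurable.ite (measurableSet_lt measurable_fst measurable_snd) (by fun_prop) measurable_const
  have htest_pos : ∀ r ∈ Ioo (0 : ℝ) 1, 0 < schurTest α r := fun r hr => by
    have : 0 < 1 - r ^ 2 := by nlinarith [hr.1, hr.2]
    have := hr.1
    unfold schurTest; positivity
  rw [show (8 / α) = 4 / α * 2 by ring, ENNReal.ofReal_mul (by positivity), ENNReal.ofReal_ofNat]
  refine lintegral_sq_lintegral_mul_le_of_schur hK hG htest hweight htest hweight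
    (ae_restrict_of_forall_mem measurableSet_Ioo fun r hr =>
      ⟨(ENNReal.ofReal_pos.2 (htest_pos r hr)).ne', ENNReal.ofReal_ne_top⟩)
    (ae_restrict_of_forall_mem measurableSet_Ioo fun s hs => ?_)
    (ae_restrict_of_forall_mem measurableSet_Ioo fun r hr => ?_)
  · rw [setLIntegral_Ioo_volterraKernel_right hs.1.le,
      ← ENNReal.ofReal_mul (by positivity : 0 ≤ 4 / α)]
    refine le_trans (le_of_eq (setLIntegral_congr_fun measurableSet_Ioo fun r hr => ?_))
      (setLIntegral_Ioo_kernel_mul_schurTest_le hα0 hα2 m hs.1 hs.2)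
    rw [← ENNReal.ofReal_mul
      (by have := hs.1; have := hs.1.trans hr.1; positivity :
        (0 : ℝ) ≤ 2 * (m + 1) * s ^ m / r ^ (m + 1))]
  · simp_rw [mul_assoc]
    rw [setLIntegral_Ioo_volterraKernel_left hr.2.le, ← ENNReal.ofReal_mul (htest_pos r hr).le,
      schurTest_mul_weight α hr.1 hr.2, ← ENNReal.ofReal_ofNat 2,
      ← ENNReal.ofReal_mul zero_le_two]
    refine le_trans (le_of_eq (setLIntegral_congr_fun measurableSet_Ioo fun s hs => ?_))
      (setLIntegral_Ioo_kernel_mul_rpow_le hα0.le m hr.1 hr.2)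
    have hs1 : s < 1 := hs.2.trans hr.2
    rw [← ENNReal.ofReal_mul (htest_pos s ⟨hs.1, hs1⟩).le,
      schurTest_mul_weight α hs.1 hs1, ← ENNReal.ofReal_mul
        (by have := hs.1; have := hr.1; positivity :
          (0 : ℝ) ≤ 2 * (m + 1) * s ^ m / r ^ (m + 1))]

theorem ENNReal.add_sq_le_two_mul (a b : ℝ≥0∞) : (a + b) ^ 2 ≤ 2 * (a ^ 2 + b ^ 2) := by
  induction a using ENNReal.recTopCoe <;> induction b using ENNReal.recTopCoe <;> try simp
  norm_cast
  exact add_sq_le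

theorem lintegral_sq_add_mul_le {X : Type*} [MeasurableSpace X] {μ : Measure X}
    {F G w : X → ℝ≥0∞} (hG : Measurable G) (hw : Measurable w) :
    ∫⁻ x, (F x + G x) ^ 2 * w x ∂μ
      ≤ 2 * (∫⁻ x, F x ^ 2 * w x ∂μ) + 2 * ∫⁻ x, G x ^ 2 * w x ∂μ := by
  calc _ ≤ ∫⁻ x, 2 * (F x ^ 2 * w x) + 2 * (G x ^ 2 * w x) ∂μ := lintegral_mono fun x =>
        calc (F x + G x) ^ 2 * w x ≤ 2 * (F x ^ 2 + G x ^ 2) * w x := by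
              gcongr; exact ENNReal.add_sq_le_two_mul _ _
          _ = _ := by ring
    _ = _ := by
        rw [lintegral_add_right _ (by fun_prop), lintegral_const_mul' _ _ (by simp),
          lintegral_const_mul' _ _ (by simp)]

theorem Complex.enorm_ofReal_of_nonneg {x : ℝ} (hx : 0 ≤ x) : ‖(x : ℂ)‖ₑ = ENNReal.ofReal x := by
  rw [← Real.enorm_eq_ofReal hx, enorm_eq_nnnorm, enorm_eq_nnnorm, Complex.nnnorm_real]

theorem enorm_Bl_le (m : ℕ) (f : ℝ → ℂ) {s : ℝ} (hs : 0 ≤ s) :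
    ‖Bl (m + 2) f s‖ₑ ≤ (∫⁻ r in Ioo 0 1, volterraKernel m s r * ‖f r‖ₑ) + ‖f s‖ₑ := by
  rw [setLIntegral_Ioo_volterraKernel_right hs, Bl, ← neg_add', enorm_neg]
  refine (enorm_add_le _ _).trans ?_
  gcongr ?_ + _
  have hc : 2 * ((((m : ℤ) + 2 : ℤ) : ℝ) - 1) * s ^ ((m : ℤ) + 2 - 2) = 2 * (m + 1) * s ^ m := by
    rw [add_sub_cancel_right, zpow_natCast]; push_cast; ring
  have hr : ∀ r : ℝ, r ^ (1 - ((m : ℤ) + 2)) = (r ^ (m + 1))⁻¹ := fun r => by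
    rw [show 1 - ((m : ℤ) + 2) = -((m + 1 : ℕ) : ℤ) by push_cast; ring, zpow_neg, zpow_natCast]
  simp only [hc, hr]
  have hc0 : 0 ≤ 2 * ((m : ℝ) + 1) * s ^ m := by positivity
  calc _ = ENNReal.ofReal (2 * (m + 1) * s ^ m) *
        ‖∫ r in Ioo s 1, (((r ^ (m + 1))⁻¹ : ℝ) : ℂ) * f r‖ₑ := by
        rw [enorm_mul, Complex.enorm_ofReal_of_nonneg hc0]
    _ ≤ ENNReal.ofReal (2 * (m + 1) * s ^ m) *
        ∫⁻ r in Ioo s 1, ‖(((r ^ (m + 1))⁻¹ : ℝ) : ℂ) * f r‖ₑ := by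
        gcongr; exact enorm_integral_le_lintegral_enorm _
    _ = _ := by
        rw [← lintegral_const_mul' _ _ ofReal_ne_top]
        refine setLIntegral_congr_fun measurableSet_Ioo fun r hr => ?_
        have hr0 : 0 ≤ (r ^ (m + 1))⁻¹ := inv_nonneg.2 (pow_nonneg (hs.trans hr.1.le) _)
        rw [enorm_mul, Complex.enorm_ofReal_of_nonneg hr0, ← mul_assoc,
          ← ENNReal.ofReal_mul hc0, div_eq_mul_inv]

theorem stmt14_general (α : ℝ) (hα0 : 0 < α) (hα1 : α < 1) (l : ℤ) (hl : 2 ≤ l)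
    (f : ℝ → ℂ) (hf : Measurable f) :
    ∫⁻ s in Ioo (0:ℝ) 1,
        (‖Bl l f s‖₊ : ℝ≥0∞)^2 * ENNReal.ofReal ((1 - s^2) ^ (1 - α) * s)
      ≤ ENNReal.ofReal ((23 / α)^2) *
        ∫⁻ r in Ioo (0:ℝ) 1,
          (‖f r‖₊ : ℝ≥0∞)^2 * ENNReal.ofReal ((1 - r^2) ^ (1 - α) * r) := by
  obtain ⟨m, rfl⟩ : ∃ m : ℕ, l = m + 2 := ⟨(l - 2).toNat, by omega⟩
  set w : ℝ → ℝ≥0∞ := fun s => ENNReal.ofReal ((1 - s ^ 2) ^ (1 - α) * s)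
  set I := ∫⁻ r in Ioo (0:ℝ) 1, ‖f r‖ₑ ^ 2 * w r
  have hconst : 2 * ENNReal.ofReal (8 / α) + 2 ≤ ENNReal.ofReal ((23 / α) ^ 2) := by
    rw [← ENNReal.ofReal_ofNat 2, ← ENNReal.ofReal_mul zero_le_two,
      ← ENNReal.ofReal_add (by positivity) zero_le_two, div_pow]
    refine ENNReal.ofReal_le_ofReal ((le_div_iff₀ (by positivity)).2 ?_)
    have : (2 * (8 / α) + 2) * α ^ 2 = 16 * α + 2 * α ^ 2 := by field_simp; ring
    nlinarith
  calc _ ≤ ∫⁻ s in Ioo 0 1,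
        ((∫⁻ r in Ioo 0 1, volterraKernel m s r * ‖f r‖ₑ) + ‖f s‖ₑ) ^ 2 * w s :=
        setLIntegral_mono' measurableSet_Ioo fun s hs => by
          gcongr; exact enorm_Bl_le m f hs.1.le
    _ ≤ 2 * (∫⁻ s in Ioo 0 1, (∫⁻ r in Ioo 0 1, volterraKernel m s r * ‖f r‖ₑ) ^ 2 * w s)
          + 2 * I := lintegral_sq_add_mul_le hf.enorm (by fun_prop)
    _ ≤ 2 * (ENNReal.ofReal (8 / α) * I) + 2 * I := by
        gcongr; exact setLIntegral_sq_volterraKernel_le hα0 (by linarith) m hf.enorm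
    _ = (2 * ENNReal.ofReal (8 / α) + 2) * I := by ring
    _ ≤ ENNReal.ofReal ((23 / α) ^ 2) * I := by gcongr

theorem stmt14 (α : ℝ) (hα0 : 0 < α) (hα1 : α < 1) (l : ℤ) (hl : 2 ≤ l)
    (f : ℝ → ℂ) (hf : Measurable f)
    (hf2 : (∫⁻ r in Ioo (0:ℝ) 1,
        (‖f r‖₊ : ℝ≥0∞)^2 * ENNReal.ofReal ((1 - r^2) ^ (1 - α) * r)) < ⊤) :
    ∫⁻ s in Ioo (0:ℝ) 1,
        (‖Bl l f s‖₊ : ℝ≥0∞)^2 * ENNReal.ofReal ((1 - s^2) ^ (1 - α) * s)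
      ≤ ENNReal.ofReal ((23 / α)^2) *
        ∫⁻ r in Ioo (0:ℝ) 1,
          (‖f r‖₊ : ℝ≥0∞)^2 * ENNReal.ofReal ((1 - r^2) ^ (1 - α) * r) :=
  stmt14_general α hα0 hα1 l hl f hf
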